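/- arXiv:1405.0290 — 5 statements merged into one kernel-verified Lean document; each statement's English description precedes it below -/
import Mathlib

section
/- For any integer n > 1, there exists a positive integer m such that the Lucas number L_m satisfies L_m ≡ -1 (mod n). -/
/-!
The pair map `(a, b) ↦ (b, b + a)` is a permutation of `(ℤ/n)²`, so it has finite order `k ≥ 1`
and the Lucas sequence modulo `n` is purely periodic with period `k`. Running the recurrence
backwards from `L_{2k} ≡ L_0 = 2` and `L_{2k+1} ≡ L_1 = 1` gives `L_{2k-1} ≡ 1 - 2 = -1`
(the period is doubled because `k - 1` may be `0`).
-/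

def lucas : ℕ → ℕ
  | 0 => 2
  | 1 => 1
  | n + 2 => lucas (n + 1) + lucas n

def fibStep (R : Type*) [AddGroup R] : Equiv.Perm (R × R) where
  toFun p := (p.2, p.2 + p.1)
  invFun p := (-p.1 + p.2, p.1)
  left_inv p := by simp
  right_inv p := by simp

section FibRecurrence

variable {R : Type*} [AddGroup R] {u : ℕ → R}

theorem pair_eq_fibStep_pow (hu : ∀ n, u (n + 2) = u (n + 1) + u n) (n : ℕ) :
    (u n, u (n + 1)) = (fibStep R ^ n) (u 0, u 1) := by
  induction n with
  | zero => rfl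
  | succ n ih =>
    rw [pow_succ', Equiv.Perm.mul_apply, ← ih]
    simp [fibStep, hu]

theorem exists_pos_periodic_of_fib_rec [Finite R] (hu : ∀ n, u (n + 2) = u (n + 1) + u n) :
    ∃ k, 0 < k ∧ Function.Periodic u k := by
  refine ⟨orderOf (fibStep R), orderOf_pos _, fun n => ?_⟩
  have hpair : (u (n + orderOf (fibStep R)), u (n + orderOf (fibStep R) + 1)) =
      (u n, u (n + 1)) := by
    rw [pair_eq_fibStep_pow hu, pow_add, pow_orderOf_eq_one, mul_one, ← pair_eq_fibStep_pow hu]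
  exact congrArg Prod.fst hpair

end FibRecurrence

theorem lucas_cast_add_two {R : Type*} [AddMonoidWithOne R] (n : ℕ) :
    (lucas (n + 2) : R) = lucas (n + 1) + lucas n := by
  rw [lucas, Nat.cast_add]

theorem exists_lucas_cast_eq_neg_one {R : Type*} [Ring R] [Finite R] :
    ∃ m, 0 < m ∧ (lucas m : R) = -1 := by
  obtain ⟨k, hk, hper⟩ := exists_pos_periodic_of_fib_rec
    (u := fun n => (lucas n : R)) lucas_cast_add_two
  obtain ⟨m, hm⟩ : ∃ m, 2 * k = m + 1 := ⟨2 * k - 1, by omega⟩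
  refine ⟨m, by omega, ?_⟩
  have hper2 : Function.Periodic (fun n => (lucas n : R)) (2 * k) := hper.nat_mul 2
  have h0 : (lucas (m + 1) : R) = 2 := by
    rw [← hm]
    simpa [lucas] using hper2 0
  have h1 : (lucas (m + 2) : R) = 1 := by
    rw [show m + 2 = 1 + 2 * k by omega]
    simpa [lucas] using hper2 1
  have hrec := lucas_cast_add_two (R := R) m
  rw [h0, h1] at hrec
  rw [eq_sub_of_add_eq' hrec.symm]
  norm_num

theorem lucas_congr_neg_one (n : ℤ) (hn : 1 < n) :
    ∃ m : ℕ, 0 < m ∧ (lucas m : ℤ) ≡ -1 [ZMOD n] := by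
  have hn' : ((n.toNat : ℕ) : ℤ) = n := Int.toNat_of_nonneg (by omega)
  have : NeZero n.toNat := ⟨by omega⟩
  obtain ⟨m, hm, hlucas⟩ := exists_lucas_cast_eq_neg_one (R := ZMod n.toNat)
  refine ⟨m, hm, ?_⟩
  rw [← hn', ← ZMod.intCast_eq_intCast_iff]
  push_cast
  exact hlucas
end

section
/- Let p be an odd prime, write p - 1 = 2^s · t with t odd, let a be a quadratic residue modulo p with p ∤ a, and let d be a quadratic nonresidue modulo p. If m is an even integer with (a·d^m)^t ≡ 1 (mod p), then x = a^((t+1)/2) · d^(t·m/2) satisfies x^2 ≡ a (mod p). -/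
theorem sq_pow_half_mul_pow_half {M : Type*} [CommMonoid M] (a d : M) {t m : ℕ}
    (ht : Odd t) (hm : Even m) :
    (a ^ ((t + 1) / 2) * d ^ (t * m / 2)) ^ 2 = a * (a * d ^ m) ^ t := by
  obtain ⟨k, rfl⟩ := ht
  obtain ⟨j, rfl⟩ := hm
  have hhalf_t : (2 * k + 1 + 1) / 2 = k + 1 := by omega
  have hhalf_tm : (2 * k + 1) * (j + j) / 2 = (2 * k + 1) * j := by
    rw [← two_mul, mul_left_comm, Nat.mul_div_cancel_left _ two_pos]
  rw [hhalf_t, hhalf_tm, mul_pow, mul_pow, ← pow_mul, ← pow_mul, ← pow_mul, ← mul_assoc,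
    ← pow_succ']
  congr 2 <;> ring

theorem tonelli_shanks_final_general (p : ℕ)
    (t : ℕ) (ht : Odd t)
    (a d : ℤ)
    (m : ℕ) (hm : Even m)
    (h : (a * d ^ m) ^ t ≡ 1 [ZMOD p]) :
    (a ^ ((t + 1) / 2) * d ^ (t * m / 2)) ^ 2 ≡ a [ZMOD p] :=
  calc (a ^ ((t + 1) / 2) * d ^ (t * m / 2)) ^ 2 = a * (a * d ^ m) ^ t :=
        sq_pow_half_mul_pow_half a d ht hm
    _ ≡ a * 1 [ZMOD p] := h.mul_left a
    _ = a := mul_one a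

theorem tonelli_shanks_final (p : ℕ) (hp : p.Prime) (hodd : Odd p)
    (s t : ℕ) (ht : Odd t) (hst : p - 1 = 2 ^ s * t)
    (a d : ℤ) (ha : ¬ (p : ℤ) ∣ a)
    (haQR : ∃ x : ℤ, x ^ 2 ≡ a [ZMOD p])
    (hdQNR : ¬ ∃ x : ℤ, x ^ 2 ≡ d [ZMOD p])
    (m : ℕ) (hm : Even m)
    (h : (a * d ^ m) ^ t ≡ 1 [ZMOD p]) :
    (a ^ ((t + 1) / 2) * d ^ (t * m / 2)) ^ 2 ≡ a [ZMOD p] :=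
  tonelli_shanks_final_general p t ht a d m hm h
end

section
/- Let p be an odd prime, write p - 1 = 2^s · t with t odd, let a be an integer with p ∤ a, and let d be a quadratic nonresidue modulo p. If i < s and (a·d^m)^(2^(s-i-1)·t) ≡ -1 (mod p) for some integer m, then (a·d^(m+2^i))^(2^(s-i-1)·t) ≡ 1 (mod p). -/
/-!
Multiplying `a * d ^ m` by `d ^ (2 ^ i)` multiplies its `2 ^ (s - i - 1) * t`-th power by
`d ^ (2 ^ (s - 1) * t) = d ^ ((p - 1) / 2)`, which is `-1` by Euler's criterion; so `-1` becomes `1`.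
-/

theorem mul_pow_pow_eq_one_of_pow_eq_neg_one {M : Type*} [CommMonoid M] [HasDistribNeg M]
    {x d : M} {k e : ℕ} (hx : x ^ e = -1) (hd : d ^ (k * e) = -1) : (x * d ^ k) ^ e = 1 := by
  rw [mul_pow, ← pow_mul, hx, hd, neg_one_mul, neg_neg]

theorem two_pow_mul_two_pow_sub_mul_eq_div_two {p s t i : ℕ} (hst : p - 1 = 2 ^ s * t)
    (hi : i < s) : 2 ^ i * (2 ^ (s - i - 1) * t) = p / 2 := by
  have : p - 1 = 2 * (2 ^ i * (2 ^ (s - i - 1) * t)) := by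
    rw [hst, ← mul_assoc, ← mul_assoc, ← pow_succ', ← pow_add]
    congr 2
    omega
  omega

namespace ZMod

theorem isSquare_intCast_iff_exists_sq_modEq {n : ℕ} {d : ℤ} :
    IsSquare (d : ZMod n) ↔ ∃ x : ℤ, x ^ 2 ≡ d [ZMOD n] := by
  constructor
  · rintro ⟨x, hx⟩
    obtain ⟨x, rfl⟩ := intCast_surjective x
    exact ⟨x, (intCast_eq_intCast_iff _ _ _).1 (by push_cast; rw [hx, sq])⟩
  · rintro ⟨x, hx⟩
    rw [← intCast_eq_intCast_iff] at hx
    push_cast at hx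
    exact ⟨x, by rw [← hx, sq]⟩

theorem pow_div_two_eq_neg_one_of_not_isSquare {p : ℕ} [Fact p.Prime] {a : ZMod p}
    (h : ¬IsSquare a) : a ^ (p / 2) = -1 := by
  have ha : a ≠ 0 := by
    rintro rfl
    exact h IsSquare.zero
  exact (pow_div_two_eq_neg_one_or_one p ha).resolve_left (mt (euler_criterion p ha).2 h)

end ZMod

theorem tonelli_shanks_step_general (p : ℕ) (hp : p.Prime)
    (s t : ℕ) (hst : p - 1 = 2 ^ s * t)
    (a d : ℤ)
    (hdQNR : ¬ ∃ x : ℤ, x ^ 2 ≡ d [ZMOD p])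
    (i : ℕ) (hi : i < s) (m : ℕ)
    (h : (a * d ^ m) ^ (2 ^ (s - i - 1) * t) ≡ -1 [ZMOD p]) :
    (a * d ^ (m + 2 ^ i)) ^ (2 ^ (s - i - 1) * t) ≡ 1 [ZMOD p] := by
  have := Fact.mk hp
  have hd : (d : ZMod p) ^ (2 ^ i * (2 ^ (s - i - 1) * t)) = -1 := by
    rw [two_pow_mul_two_pow_sub_mul_eq_div_two hst hi]
    exact ZMod.pow_div_two_eq_neg_one_of_not_isSquare
      (mt ZMod.isSquare_intCast_iff_exists_sq_modEq.1 hdQNR)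
  rw [← ZMod.intCast_eq_intCast_iff] at h ⊢
  push_cast at h ⊢
  rw [pow_add, ← mul_assoc]
  exact mul_pow_pow_eq_one_of_pow_eq_neg_one h hd

theorem tonelli_shanks_step (p : ℕ) (hp : p.Prime) (hodd : Odd p)
    (s t : ℕ) (ht : Odd t) (hst : p - 1 = 2 ^ s * t)
    (a d : ℤ) (ha : ¬ (p : ℤ) ∣ a)
    (hdQNR : ¬ ∃ x : ℤ, x ^ 2 ≡ d [ZMOD p])
    (i : ℕ) (hi : i < s) (m : ℕ)
    (h : (a * d ^ m) ^ (2 ^ (s - i - 1) * t) ≡ -1 [ZMOD p]) :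
    (a * d ^ (m + 2 ^ i)) ^ (2 ^ (s - i - 1) * t) ≡ 1 [ZMOD p] :=
  tonelli_shanks_step_general p hp s t hst a d hdQNR i hi m h
end

section
/- No Fibonacci number is a primitive root modulo the prime 3001. -/
/-! The Fibonacci sequence modulo 3001 has period 100 (`F_100 ≡ 0`, `F_101 ≡ 1`). Each of the
residues `F_0, …, F_99` is either `0` or has order dividing one of the maximal proper divisors
`3000 / 5`, `3000 / 3`, `3000 / 2` of `3000`, which a finite computation checks. -/

theorem Nat.cast_fib_periodic {R : Type*} [NonAssocSemiring R] {P : ℕ}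
    (h0 : (Nat.fib P : R) = 0) (h1 : (Nat.fib (P + 1) : R) = 1) :
    Function.Periodic (fun n ↦ (Nat.fib n : R)) P := by
  rintro (_ | m)
  · simpa using h0
  · simp only [add_right_comm m 1 P, Nat.fib_add, Nat.cast_add, Nat.cast_mul, h0, h1,
      mul_zero, mul_one, zero_add]

theorem orderOf_ne_of_pow_eq_one {M : Type*} [Monoid M] {x : M} {m n : ℕ}
    (hm : 0 < m) (hmn : m < n) (h : x ^ m = 1) : orderOf x ≠ n :=
  fun hx ↦ (orderOf_le_of_pow_eq_one hm h).not_gt (hx ▸ hmn)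

theorem cast_fib_periodic_zmod_3001 : Function.Periodic (fun n ↦ (Nat.fib n : ZMod 3001)) 100 :=
  Nat.cast_fib_periodic (by decide) (by decide)

theorem cast_fib_zmod_3001_eq_zero_or_pow_eq_one :
    ∀ r < 100, (Nat.fib r : ZMod 3001) = 0 ∨ (Nat.fib r : ZMod 3001) ^ 600 = 1 ∨
      (Nat.fib r : ZMod 3001) ^ 1000 = 1 ∨ (Nat.fib r : ZMod 3001) ^ 1500 = 1 := by
  set_option maxRecDepth 100000 in decide

theorem no_fib_primitive_root_3001 (k : ℕ) :
    orderOf ((Nat.fib k : ZMod 3001)) ≠ 3000 := by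
  rw [← cast_fib_periodic_zmod_3001.map_mod_nat k]
  obtain h | h | h | h :=
    cast_fib_zmod_3001_eq_zero_or_pow_eq_one (k % 100) (Nat.mod_lt k (by norm_num))
  · have : Fact (1 < 3001) := ⟨by norm_num⟩
    rw [h, orderOf_zero]
    norm_num
  all_goals exact orderOf_ne_of_pow_eq_one (by norm_num) (by norm_num) h
end

section
/- For the prime p = 2089, there is no prime q < 2089 such that 2^q + 1 is a primitive root modulo 2089. -/
/-! Since `2088 = 2³·3²·29` and `2` has order `29` modulo `2089`, the residue of `2 ^ q + 1` depends
only on `q % 29`. For each of the 29 residues, `2 ^ r + 1` is a quadratic or a cubic residue, i.e. its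
`1044`-th or `696`-th power is `1`, so its order is a proper divisor of `2088`. -/

theorem orderOf_ne_of_pow_eq_one_s16 {G : Type*} [Monoid G] {x : G} {e n : ℕ} (he : 0 < e)
    (hen : e < n) (h : x ^ e = 1) : orderOf x ≠ n :=
  ((orderOf_le_of_pow_eq_one he h).trans_lt hen).ne

namespace ZMod2089

theorem two_pow_29 : (2 : ZMod 2089) ^ 29 = 1 := by decide

set_option maxRecDepth 10000 in
theorem two_pow_add_one_pow_1044_or_696 : ∀ r < 29,
    ((2 : ZMod 2089) ^ r + 1) ^ 1044 = 1 ∨ ((2 : ZMod 2089) ^ r + 1) ^ 696 = 1 := by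
  decide

theorem natCast_two_pow_add_one (q : ℕ) :
    ((2 ^ q + 1 : ℕ) : ZMod 2089) = 2 ^ (q % 29) + 1 := by
  push_cast
  rw [pow_eq_pow_mod q two_pow_29]

end ZMod2089

theorem no_mersenne_plus_one_primroot_2089 :
    ¬ ∃ q : ℕ, q.Prime ∧ q < 2089 ∧ orderOf (((2 ^ q + 1 : ℕ)) : ZMod 2089) = 2088 := by
  rintro ⟨q, -, -, hord⟩
  rw [ZMod2089.natCast_two_pow_add_one] at hord
  rcases ZMod2089.two_pow_add_one_pow_1044_or_696 (q % 29) (Nat.mod_lt q (by norm_num))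
    with h | h <;> exact orderOf_ne_of_pow_eq_one_s16 (by norm_num) (by norm_num) h hord
end
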